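/- Define $u_1: \mathbb{R} \to \mathbb{R}$ by $u_1 = 0$ on $(-\infty,0]$, $u_1 = 6$ on $(0,1)$, $u_1(1) = 9$, $u_1 = 10$ on $(1,2)$, $u_1 = 12$ on $[2,\infty)$. Then for every $x \in (0,2)$, $u_1(x) = \tfrac{1}{2}\sup_{(x-1,x+1)} u_1 + \tfrac{1}{2}\inf_{(x-1,x+1)} u_1 + 1$, so $u_1$ is a discontinuous (not even semicontinuous) solution of the DPP with running cost $f \equiv 1$. -/

import Mathlib

/-- The function of Example 1.1 (case `f ≡ 1`): `0` on `(-∞,0]`, `6` on `(0,1)`,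
`9` at `1`, `10` on `(1,2)`, `12` on `[2,∞)`. -/
noncomputable def u₁ (x : ℝ) : ℝ :=
  if x ≤ 0 then 0
  else if x < 1 then 6
  else if x = 1 then 9
  else if x < 2 then 10
  else 12

/-!
`u₁` is nondecreasing and constant on each of its pieces, so on `(x - 1, x + 1)` its infimum
and supremum are the values on the pieces touching the two ends: `0, 10` for `x ∈ (0,1)`,
`6, 10` for `x = 1` and `6, 12` for `x ∈ (1,2)`, and in each case their mean plus `1` is `u₁ x`.
At `1` the value `9` lies strictly between the one-sided limits `6` and `10`, so `u₁` is
neither lower nor upper semicontinuous there.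
-/

open Set Filter Topology

section Order

variable {α β : Type*} [LinearOrder α] [Preorder β] {f : α → β} {a b c : α} {v : β}

theorem Monotone.isLeast_image_Ioo (hf : Monotone f) (hc : c ∈ Ioo a b)
    (hconst : ∀ t ∈ Ioc a c, f t = v) : IsLeast (f '' Ioo a b) v := by
  have hfc : f c = v := hconst c ⟨hc.1, le_rfl⟩
  refine ⟨⟨c, hc, hfc⟩, ?_⟩
  rintro _ ⟨t, ht, rfl⟩
  rcases le_total t c with htc | hct
  · exact (hconst t ⟨ht.1, htc⟩).ge
  · exact hfc ▸ hf hct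

theorem Monotone.isGreatest_image_Ioo (hf : Monotone f) (hc : c ∈ Ioo a b)
    (hconst : ∀ t ∈ Ico c b, f t = v) : IsGreatest (f '' Ioo a b) v := by
  have hfc : f c = v := hconst c ⟨le_rfl, hc.2⟩
  refine ⟨⟨c, hc, hfc⟩, ?_⟩
  rintro _ ⟨t, ht, rfl⟩
  rcases le_total c t with hct | htc
  · exact (hconst t ⟨hct, ht.2⟩).le
  · exact hfc ▸ hf htc

end Order

section Semicontinuity

variable {α β : Type*} [TopologicalSpace α] [Preorder β] {f : α → β} {x : α} {y : β}
  {l : Filter α} [l.NeBot]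

theorem not_lowerSemicontinuousAt_of_eventually_le (hl : l ≤ 𝓝 x) (hy : y < f x)
    (hf : ∀ᶠ t in l, f t ≤ y) : ¬ LowerSemicontinuousAt f x := fun h =>
  let ⟨_, hlt, hle⟩ := (((h y hy).filter_mono hl).and hf).exists
  (hlt.trans_le hle).false

theorem not_upperSemicontinuousAt_of_eventually_ge (hl : l ≤ 𝓝 x) (hy : f x < y)
    (hf : ∀ᶠ t in l, y ≤ f t) : ¬ UpperSemicontinuousAt f x := fun h =>
  let ⟨_, hlt, hle⟩ := (((h y hy).filter_mono hl).and hf).exists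
  (hle.trans_lt hlt).false

end Semicontinuity

section Values

variable {t : ℝ}

theorem u₁_of_nonpos (ht : t ≤ 0) : u₁ t = 0 := by simp [u₁, ht]

theorem u₁_of_mem_Ioo_zero_one (ht : t ∈ Ioo 0 1) : u₁ t = 6 := by
  simp [u₁, ht.1.not_ge, ht.2]

theorem u₁_one : u₁ 1 = 9 := by norm_num [u₁]

theorem u₁_of_mem_Ioo_one_two (ht : t ∈ Ioo 1 2) : u₁ t = 10 := by
  simp [u₁, (one_pos.trans ht.1).not_ge, ht.1.not_gt, ht.1.ne', ht.2]

theorem u₁_of_two_le (ht : 2 ≤ t) : u₁ t = 12 := by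
  simp [u₁, (zero_lt_two.trans_le ht).not_ge, (one_lt_two.trans_le ht).not_gt,
    (one_lt_two.trans_le ht).ne', ht.not_gt]

end Values

theorem monotone_u₁ : Monotone u₁ := by
  intro s t hst
  simp only [u₁]
  split_ifs <;> grind

theorem u₁_eq_dpp {x : ℝ} (hx : x ∈ Ioo 0 2) :
    u₁ x = (1 / 2) * sSup (u₁ '' Ioo (x - 1) (x + 1)) +
      (1 / 2) * sInf (u₁ '' Ioo (x - 1) (x + 1)) + 1 := by
  obtain ⟨hx0, hx2⟩ := hx
  rcases lt_trichotomy x 1 with hx1 | rfl | hx1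
  · have hsup : IsGreatest (u₁ '' Ioo (x - 1) (x + 1)) 10 :=
      monotone_u₁.isGreatest_image_Ioo (c := (x + 2) / 2) ⟨by linarith, by linarith⟩
        fun t ht => u₁_of_mem_Ioo_one_two ⟨by linarith [ht.1], by linarith [ht.2]⟩
    have hinf : IsLeast (u₁ '' Ioo (x - 1) (x + 1)) 0 :=
      monotone_u₁.isLeast_image_Ioo (c := 0) ⟨by linarith, by linarith⟩
        fun t ht => u₁_of_nonpos ht.2
    rw [hsup.csSup_eq, hinf.csInf_eq, u₁_of_mem_Ioo_zero_one ⟨hx0, hx1⟩]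
    norm_num
  · have hsup : IsGreatest (u₁ '' Ioo (1 - 1) (1 + 1)) 10 :=
      monotone_u₁.isGreatest_image_Ioo (c := 3 / 2) ⟨by norm_num, by norm_num⟩
        fun t ht => u₁_of_mem_Ioo_one_two ⟨by linarith [ht.1], by linarith [ht.2]⟩
    have hinf : IsLeast (u₁ '' Ioo (1 - 1) (1 + 1)) 6 :=
      monotone_u₁.isLeast_image_Ioo (c := 1 / 2) ⟨by norm_num, by norm_num⟩
        fun t ht => u₁_of_mem_Ioo_zero_one ⟨by linarith [ht.1], by linarith [ht.2]⟩
    rw [hsup.csSup_eq, hinf.csInf_eq, u₁_one]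
    norm_num
  · have hsup : IsGreatest (u₁ '' Ioo (x - 1) (x + 1)) 12 :=
      monotone_u₁.isGreatest_image_Ioo (c := 2) ⟨by linarith, by linarith⟩
        fun t ht => u₁_of_two_le ht.1
    have hinf : IsLeast (u₁ '' Ioo (x - 1) (x + 1)) 6 :=
      monotone_u₁.isLeast_image_Ioo (c := x / 2) ⟨by linarith, by linarith⟩
        fun t ht => u₁_of_mem_Ioo_zero_one ⟨by linarith [ht.1], by linarith [ht.2]⟩
    rw [hsup.csSup_eq, hinf.csInf_eq, u₁_of_mem_Ioo_one_two ⟨hx1, hx2⟩]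
    norm_num

theorem not_lowerSemicontinuousAt_u₁_one : ¬ LowerSemicontinuousAt u₁ 1 := by
  refine not_lowerSemicontinuousAt_of_eventually_le (l := 𝓝[<] 1) (y := 6)
    nhdsWithin_le_nhds (by norm_num [u₁_one]) ?_
  filter_upwards [Ioo_mem_nhdsLT zero_lt_one] with t ht
  exact (u₁_of_mem_Ioo_zero_one ht).le

theorem not_upperSemicontinuousAt_u₁_one : ¬ UpperSemicontinuousAt u₁ 1 := by
  refine not_upperSemicontinuousAt_of_eventually_ge (l := 𝓝[>] 1) (y := 10)
    nhdsWithin_le_nhds (by norm_num [u₁_one]) ?_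
  filter_upwards [Ioo_mem_nhdsGT one_lt_two] with t ht
  exact (u₁_of_mem_Ioo_one_two ht).ge

/-- `u₁` is a discontinuous (not even semicontinuous) solution of the tug-of-war
DPP with running cost `f ≡ 1`, `Y = (0,2)`, `μ = 1/2`, `ε = 1`:
`u₁(x) = ½ sup_{(x-1,x+1)} u₁ + ½ inf_{(x-1,x+1)} u₁ + 1` for all `x ∈ (0,2)`. -/
theorem u₁_solves_dpp :
    (∀ x ∈ Set.Ioo (0 : ℝ) 2,
      u₁ x = (1 / 2) * sSup (u₁ '' Set.Ioo (x - 1) (x + 1)) +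
        (1 / 2) * sInf (u₁ '' Set.Ioo (x - 1) (x + 1)) + 1) ∧
    ¬ LowerSemicontinuous u₁ ∧ ¬ UpperSemicontinuous u₁ :=
  ⟨fun _ hx => u₁_eq_dpp hx, fun h => not_lowerSemicontinuousAt_u₁_one (h 1),
    fun h => not_upperSemicontinuousAt_u₁_one (h 1)⟩
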